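/- Let u_k and v_k be the Lucas sequences of the first and second kind with complex parameters y, z. For all complex x, y, z, r and natural numbers n, the sum over k from 0 to n of r^(n-k) * x^k * ((y^2 - 4*z) * r * u_k + (x*y - 2*r) * v_{k+1}) equals x^(n+1) * y * v_{n+1} - 2 * y * r^(n+1) (using that v_0 = 2). -/
import Mathlib


open Finset

noncomputable def lucasU (y z : ℂ) : ℕ → ℂ
  | 0 => 0
  | 1 => 1
  | n + 2 => y * lucasU y z (n + 1) - z * lucasU y z n

noncomputable def lucasV (y z : ℂ) : ℕ → ℂ
  | 0 => 2
  | 1 => y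
  | n + 2 => y * lucasV y z (n + 1) - z * lucasV y z n

lemma lucasUV_key (y z : ℂ) : ∀ k, (y ^ 2 - 4 * z) * lucasU y z k =
    2 * lucasV y z (k + 1) - y * lucasV y z k := by
  intro k
  induction k using Nat.twoStepInduction with
  | zero => simp [lucasU, lucasV]; ring
  | one => simp [lucasU, lucasV]; ring
  | more m ih1 ih2 =>
    show (y ^ 2 - 4 * z) * lucasU y z (m + 2) = 2 * lucasV y z (m + 3) - y * lucasV y z (m + 2)
    rw [show lucasU y z (m + 2) = y * lucasU y z (m + 1) - z * lucasU y z m from rfl,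
      show lucasV y z (m + 3) = y * lucasV y z (m + 2) - z * lucasV y z (m + 1) from rfl,
      show lucasV y z (m + 2) = y * lucasV y z (m + 1) - z * lucasV y z m from rfl]
    have hrec : lucasV y z (m + 1 + 1) = y * lucasV y z (m + 1) - z * lucasV y z m := rfl
    linear_combination y * ih2 - z * ih1 + 2 * y * hrec
    
theorem stmt5 (x y z r : ℂ) (n : ℕ) :
    ∑ k ∈ Finset.range (n + 1),
        r ^ (n - k) * x ^ k *
          ((y ^ 2 - 4 * z) * r * lucasU y z k + (x * y - 2 * r) * lucasV y z (k + 1)) =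
      x ^ (n + 1) * y * lucasV y z (n + 1) - 2 * y * r ^ (n + 1) := by
  have h : ∑ k ∈ Finset.range (n + 1),
      r ^ (n - k) * x ^ k *
        ((y ^ 2 - 4 * z) * r * lucasU y z k + (x * y - 2 * r) * lucasV y z (k + 1)) =
      ∑ k ∈ Finset.range (n + 1),
        (r ^ (n + 1 - (k + 1)) * x ^ (k + 1) * (y * lucasV y z (k + 1)) -
         r ^ (n + 1 - k) * x ^ k * (y * lucasV y z k)) := by
    apply Finset.sum_congr rfl
    intro k hk
    have hkn : k ≤ n := Nat.lt_succ_iff.mp (Finset.mem_range.mp hk)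
    have h1 : n + 1 - (k + 1) = n - k := by omega
    have h2 : n + 1 - k = (n - k) + 1 := by omega
    rw [h1, h2, pow_succ]
    have := lucasUV_key y z k
    linear_combination (r ^ (n - k) * x ^ k * r) * this
  rw [h, Finset.sum_range_sub (fun k => r ^ (n + 1 - k) * x ^ k * (y * lucasV y z k))]
  simp [lucasV]
  ring
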